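/- arXiv:2604.07832 — 8 statements merged into one kernel-verified Lean document; each statement's English description precedes it below -/
import Mathlib

section
/- Let t ≥ 0 and let x₀ ∈ (0, 1] be the unique real number with x₀·e^{1−x₀} = e^{−t}. Then every complex number z with |z·e^{1−z}| = e^{−t} and |z| ≤ 1 satisfies |z| ≤ x₀, with equality exactly when z = x₀. -/
/-!
Since `‖z e^{1-z}‖ = ‖z‖ e^{1 - Re z}` and `Re z ≤ ‖z‖`, every point of the curve satisfies
`f ‖z‖ ≤ e^{-t} = f x₀` for `f x = x e^{1-x}`, which is strictly increasing on `(-∞, 1]`; hence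
`‖z‖ ≤ x₀`. Equality forces `Re z = ‖z‖`, i.e. `z` is a nonnegative real.
-/

open Set
open scoped ComplexOrder

theorem strictMonoOn_mul_exp_one_sub : StrictMonoOn (fun x : ℝ => x * Real.exp (1 - x)) (Iic 1) := by
  refine strictMonoOn_of_deriv_pos (convex_Iic 1) (by fun_prop) fun x hx => ?_
  rw [interior_Iic] at hx
  have hderiv : HasDerivAt (fun x : ℝ => x * Real.exp (1 - x)) ((1 - x) * Real.exp (1 - x)) x :=
    ((hasDerivAt_id' x).mul ((hasDerivAt_id' x).const_sub 1).exp).congr_deriv (by ring)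
  rw [hderiv.deriv]
  exact mul_pos (sub_pos.mpr hx) (Real.exp_pos _)

namespace Complex

theorem norm_mul_exp_one_sub (z : ℂ) : ‖z * exp (1 - z)‖ = ‖z‖ * Real.exp (1 - z.re) := by
  rw [norm_mul, norm_exp, sub_re, one_re]

theorem norm_mul_exp_one_sub_norm_le (z : ℂ) : ‖z‖ * Real.exp (1 - ‖z‖) ≤ ‖z * exp (1 - z)‖ := by
  rw [norm_mul_exp_one_sub]
  gcongr
  exact re_le_norm z

theorem norm_mul_exp_one_sub_eq_iff {z : ℂ} (hz : z ≠ 0) :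
    ‖z * exp (1 - z)‖ = ‖z‖ * Real.exp (1 - ‖z‖) ↔ 0 ≤ z := by
  rw [norm_mul_exp_one_sub, mul_right_inj' (norm_ne_zero_iff.mpr hz), Real.exp_eq_exp,
    sub_right_inj, re_eq_norm]

end Complex

theorem szego_curve_modulus_bound_general (t : ℝ) (x₀ : ℝ)
    (hx : x₀ ∈ Set.Ioc (0 : ℝ) 1)
    (hx0 : x₀ * Real.exp (1 - x₀) = Real.exp (-t))
    (z : ℂ) (hcurve : ‖z * Complex.exp (1 - z)‖ = Real.exp (-t))
    (hz1 : ‖z‖ ≤ 1) :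
    ‖z‖ ≤ x₀ ∧ (‖z‖ = x₀ ↔ z = (x₀ : ℂ)) := by
  have hle : ‖z‖ ≤ x₀ := by
    refine (strictMonoOn_mul_exp_one_sub.le_iff_le hz1 hx.2).mp ?_
    simpa only [hx0, ← hcurve] using z.norm_mul_exp_one_sub_norm_le
  refine ⟨hle, fun h => ?_, fun h => by simp [h, hx.1.le]⟩
  have hz : z ≠ 0 := norm_pos_iff.mp (h ▸ hx.1)
  have hnonneg : 0 ≤ z := (Complex.norm_mul_exp_one_sub_eq_iff hz).mp (by rw [hcurve, ← hx0, h])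
  rw [Complex.eq_coe_norm_of_nonneg hnonneg, h]

/-- On the deformed Szegő curve `γ_t`, the modulus `|z|` is maximized exactly at the
intersection point `x₀` of the curve with the positive real axis. -/
theorem szego_curve_modulus_bound (t : ℝ) (ht : 0 ≤ t) (x₀ : ℝ)
    (hx : x₀ ∈ Set.Ioc (0 : ℝ) 1)
    (hx0 : x₀ * Real.exp (1 - x₀) = Real.exp (-t))
    (z : ℂ) (hcurve : ‖z * Complex.exp (1 - z)‖ = Real.exp (-t))
    (hz1 : ‖z‖ ≤ 1) :
    ‖z‖ ≤ x₀ ∧ (‖z‖ = x₀ ↔ z = (x₀ : ℂ)) :=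
  szego_curve_modulus_bound_general t x₀ hx hx0 z hcurve hz1
end

section
/- The map z ↦ z·e^{1−z} is injective on the open unit disk {z ∈ ℂ : |z| < 1}. -/
/-!
If `a e^{1-a} = b e^{1-b}` then `a e^b = b e^a`, hence `a (e^b - e^a) = (b - a) e^a`.
Choosing `a` with the larger real part, the mean value theorem on the half-plane
`Re z ≤ Re a` gives `|e^b - e^a| ≤ e^{Re a} |b - a|`, so `|b - a| ≤ |a| |b - a|`,
which forces `a = b` when `|a| < 1`.
-/

open Complex

theorem Complex.norm_exp_sub_exp_le_of_re_le {c : ℝ} {z w : ℂ} (hz : z.re ≤ c) (hw : w.re ≤ c) :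
    ‖exp w - exp z‖ ≤ Real.exp c * ‖w - z‖ :=
  (convex_halfSpace_re_le c).norm_image_sub_le_of_norm_deriv_le
    (fun _ _ => differentiableAt_exp)
    (fun x hx => by rw [Complex.deriv_exp, norm_exp]; exact Real.exp_le_exp.mpr hx) hz hw

theorem Complex.mul_exp_eq_mul_exp_of_mul_exp_one_sub_eq {a b : ℂ}
    (h : a * exp (1 - a) = b * exp (1 - b)) : a * exp b = b * exp a := by
  have key := congrArg (· * exp (a + b - 1)) h
  simp only [mul_assoc, ← exp_add] at key
  convert key using 3 <;> ring

theorem Complex.eq_of_mul_exp_eq_mul_exp {a b : ℂ} (h : a * exp b = b * exp a) (ha : ‖a‖ < 1)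
    (hre : b.re ≤ a.re) : a = b := by
  have hdiff : a * (exp b - exp a) = (b - a) * exp a := by linear_combination h
  have hbound : ‖b - a‖ * Real.exp a.re ≤ ‖a‖ * (‖b - a‖ * Real.exp a.re) := by
    calc ‖b - a‖ * Real.exp a.re = ‖a‖ * ‖exp b - exp a‖ := by
          rw [← norm_exp, ← norm_mul, ← norm_mul, hdiff]
      _ ≤ ‖a‖ * (Real.exp a.re * ‖b - a‖) :=
          mul_le_mul_of_nonneg_left (norm_exp_sub_exp_le_of_re_le le_rfl hre) (norm_nonneg a)
      _ = ‖a‖ * (‖b - a‖ * Real.exp a.re) := by ring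
  have hzero : ‖b - a‖ * Real.exp a.re = 0 := by
    nlinarith [mul_nonneg (norm_nonneg (b - a)) (Real.exp_pos a.re).le]
  rw [mul_eq_zero, norm_eq_zero, sub_eq_zero] at hzero
  exact (hzero.resolve_right (Real.exp_pos _).ne').symm

/-- The map `z ↦ z e^{1−z}` is injective on the open unit disk. -/
theorem injOn_unit_disk :
    Set.InjOn (fun z : ℂ => z * Complex.exp (1 - z)) {z : ℂ | ‖z‖ < 1} := by
  intro a ha b hb hab
  have h := mul_exp_eq_mul_exp_of_mul_exp_one_sub_eq hab
  rcases le_total b.re a.re with hre | hre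
  · exact eq_of_mul_exp_eq_mul_exp h ha hre
  · exact (eq_of_mul_exp_eq_mul_exp h.symm hb hre).symm
end

section
/- For every complex number w with |w| < 1 there exists a unique complex number z with |z| < 1 such that z·e^{1−z} = w. Consequently, for each t ≥ 0 the map z ↦ z·e^{1−z} is a bijection from the interior of the deformed Szegő curve γ_t onto the open disk {w : |w| < e^{−t}}. -/
/-!
Write `f z = z e^{1-z}`. If `f a = f b` and `u = (a - b)/2`, then `a sinh u = u eᵘ` and
`b sinh u = u e⁻ᵘ`; adding the norms and using `‖sinh u‖ ≤ ‖u‖ cosh (re u)` (mean value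
theorem, since `‖cosh‖ ≤ cosh ∘ re`) gives `(‖a‖ + ‖b‖ - 2) ‖sinh u‖ ≥ 0`, so `f` is injective
on the unit disk. Since `f` is open and `‖f‖ ≥ 1` on the unit circle, `f` of the disk is a
relatively clopen subset of the disk containing `0`, hence all of it.

Along a ray from `0`, `‖f (s z)‖ = s ‖z‖ e^{1 - s re z}` increases for `s ∈ [0, 1]` when
`re z ≤ 1`, so `{‖z‖ < 1, ‖f z‖ < e^{-t}}` is star-shaped about `0`. It avoids `γ_t`, and for
`t ≥ 0` its closure meets the complement of `γ_t` only in itself; hence it is exactly the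
component `D_t^+`.
-/

/-- The deformed Szegő curve `γ_t = {z : |z e^{1−z}| = e^{−t}, |z| ≤ 1}`. -/
def szegoCurve (t : ℝ) : Set ℂ :=
  {z : ℂ | ‖z * Complex.exp (1 - z)‖ = Real.exp (-t) ∧ ‖z‖ ≤ 1}

/-- The interior `D_t^+` of `γ_t`: the connected component of the complement of `γ_t`
containing the origin. -/
def szegoInterior (t : ℝ) : Set ℂ :=
  connectedComponentIn (szegoCurve t)ᶜ 0

open Complex Set Metric

namespace Complex

theorem norm_cosh_le (z : ℂ) : ‖cosh z‖ ≤ Real.cosh z.re := by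
  rw [cosh, Real.cosh_eq, norm_div, Complex.norm_two]
  gcongr
  exact (norm_add_le _ _).trans_eq (by rw [norm_exp, norm_exp, neg_re])

theorem norm_sinh_le (u : ℂ) : ‖sinh u‖ ≤ ‖u‖ * Real.cosh u.re := by
  set r := |u.re|
  have hbound : ∀ z ∈ {z : ℂ | -r ≤ z.re} ∩ {z | z.re ≤ r}, ‖deriv sinh z‖ ≤ Real.cosh u.re :=
    fun z hz => by
      rw [(hasDerivAt_sinh z).deriv]
      exact (norm_cosh_le z).trans (Real.cosh_le_cosh.2 (abs_le.2 hz))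
  simpa [mul_comm] using
    ((convex_halfSpace_re_ge _).inter (convex_halfSpace_re_le _)).norm_image_sub_le_of_norm_deriv_le
      (fun z _ => differentiableAt_sinh) hbound (x := 0) (y := u)
      ⟨by simp [r], by simp [r]⟩ (abs_le.1 (le_refl r))

end Complex

noncomputable def szegoMap (z : ℂ) : ℂ := z * exp (1 - z)

theorem norm_szegoMap (z : ℂ) : ‖szegoMap z‖ = ‖z‖ * Real.exp (1 - z.re) := by
  rw [szegoMap, norm_mul, norm_exp, sub_re, one_re]

theorem continuous_szegoMap : Continuous szegoMap := by
  unfold szegoMap; fun_prop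

theorem differentiable_szegoMap : Differentiable ℂ szegoMap := by
  unfold szegoMap; fun_prop

theorem szegoMap_zero : szegoMap 0 = 0 := zero_mul _

theorem one_le_norm_szegoMap {z : ℂ} (hz : ‖z‖ = 1) : 1 ≤ ‖szegoMap z‖ := by
  rw [norm_szegoMap, hz, one_mul]
  exact Real.one_le_exp (sub_nonneg.2 (hz ▸ re_le_norm z))

theorem eq_of_szegoMap_eq {a b : ℂ} (hab : ‖a‖ + ‖b‖ < 2) (h : szegoMap a = szegoMap b) :
    a = b := by
  set u := (a - b) / 2
  have hswap : a * exp (-u) = b * exp u := by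
    have e₁ : exp (-u) = exp (1 - a) * exp ((a + b) / 2 - 1) := by
      rw [← exp_add]; congr 1; ring
    have e₂ : exp u = exp (1 - b) * exp ((a + b) / 2 - 1) := by
      rw [← exp_add]; congr 1; ring
    rw [e₁, e₂]
    unfold szegoMap at h
    linear_combination exp ((a + b) / 2 - 1) * h
  have hsum : (a + b) * sinh u = 2 * u * cosh u := by
    rw [sinh, cosh]
    linear_combination -hswap
  have ha : a * sinh u = u * exp u := by
    rw [← cosh_add_sinh]; linear_combination hsum / 2
  have hb : b * sinh u = u * exp (-u) := by
    rw [← cosh_sub_sinh]; linear_combination hsum / 2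
  have hnorm : (‖a‖ + ‖b‖) * ‖sinh u‖ = 2 * (‖u‖ * Real.cosh u.re) := by
    rw [add_mul, ← norm_mul, ← norm_mul, ha, hb, norm_mul, norm_mul, norm_exp, norm_exp, neg_re,
      Real.cosh_eq]
    ring
  have hsinh : sinh u = 0 := by
    have := norm_sinh_le u
    rw [← norm_le_zero_iff]
    nlinarith [norm_nonneg (sinh u)]
  have hu : u = 0 := by simpa [hsinh, exp_ne_zero] using ha.symm
  linear_combination 2 * hu

theorem injOn_szegoMap : InjOn szegoMap (ball 0 1) := fun a ha b hb =>
  eq_of_szegoMap_eq (by linarith [mem_ball_zero_iff.1 ha, mem_ball_zero_iff.1 hb])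

theorem isOpenMap_szegoMap : IsOpenMap szegoMap :=
  (analyticOnNhd_univ_iff_differentiable.2 differentiable_szegoMap).is_constant_or_isOpenMap
    |>.resolve_left fun ⟨w, hw⟩ => by simpa [szegoMap] using (hw 0).trans (hw 1).symm

theorem ball_subset_image_szegoMap : ball (0 : ℂ) 1 ⊆ szegoMap '' ball 0 1 := by
  have h0 : (0 : ℂ) ∈ ball 0 1 := mem_ball_self one_pos
  refine (convex_ball 0 1).isPreconnected.subset_of_closure_inter_subset
    (isOpenMap_szegoMap _ isOpen_ball) ⟨0, h0, 0, h0, szegoMap_zero⟩ ?_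
  rintro w ⟨hw, hw₁⟩
  have hclosure : closure (szegoMap '' ball 0 1) ⊆ szegoMap '' closedBall 0 1 :=
    closure_minimal (image_mono ball_subset_closedBall)
      ((isCompact_closedBall 0 1).image continuous_szegoMap).isClosed
  obtain ⟨z, hz, rfl⟩ := hclosure hw
  rw [mem_closedBall_zero_iff] at hz
  rw [mem_ball_zero_iff] at hw₁
  exact ⟨z, mem_ball_zero_iff.2 (hz.lt_of_ne fun h => (one_le_norm_szegoMap h).not_gt hw₁), rfl⟩

theorem norm_szegoMap_smul_le {z : ℂ} (hz : z.re ≤ 1) {s : ℝ} (hs₀ : 0 ≤ s) (hs₁ : s ≤ 1) :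
    ‖szegoMap (s • z)‖ ≤ ‖szegoMap z‖ := by
  rw [norm_szegoMap, norm_szegoMap, norm_smul, smul_re, Real.norm_of_nonneg hs₀, smul_eq_mul]
  calc s * ‖z‖ * Real.exp (1 - s * z.re) = ‖z‖ * (s * Real.exp (1 - s * z.re)) := by ring
    _ ≤ ‖z‖ * (Real.exp (s - 1) * Real.exp (1 - s * z.re)) := by
      gcongr
      linarith [Real.add_one_le_exp (s - 1)]
    _ ≤ ‖z‖ * Real.exp (1 - z.re) := by
      rw [← Real.exp_add]
      gcongr
      nlinarith

theorem starConvex_ball_inter_preimage_szegoMap (c : ℝ) :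
    StarConvex ℝ 0 (ball 0 1 ∩ szegoMap ⁻¹' ball 0 c) := by
  refine starConvex_zero_iff.2 fun z ⟨hz, hzc⟩ s hs₀ hs₁ => ⟨?_, ?_⟩
  · rw [mem_ball_zero_iff] at hz ⊢
    rw [norm_smul, Real.norm_of_nonneg hs₀]
    nlinarith [norm_nonneg z]
  · have hre : z.re ≤ 1 := (re_le_norm z).trans (mem_ball_zero_iff.1 hz).le
    exact mem_ball_zero_iff.2 ((norm_szegoMap_smul_le hre hs₀ hs₁).trans_lt
      (mem_ball_zero_iff.1 hzc))

theorem szegoInterior_eq {t : ℝ} (ht : 0 ≤ t) :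
    szegoInterior t = ball 0 1 ∩ szegoMap ⁻¹' ball 0 (Real.exp (-t)) := by
  set D := ball 0 1 ∩ szegoMap ⁻¹' ball 0 (Real.exp (-t))
  have h0 : (0 : ℂ) ∈ D := ⟨mem_ball_self one_pos, by simp [szegoMap_zero, Real.exp_pos]⟩
  have hD : D ⊆ (szegoCurve t)ᶜ := fun z hz hcurve => (mem_ball_zero_iff.1 hz.2).ne hcurve.1
  refine Subset.antisymm ?_
    (((starConvex_ball_inter_preimage_szegoMap _).isPathConnected h0).isConnected.isPreconnected
      |>.subset_connectedComponentIn h0 hD)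
  refine isPreconnected_connectedComponentIn.subset_of_closure_inter_subset
    (isOpen_ball.inter (isOpen_ball.preimage continuous_szegoMap))
    ⟨0, mem_connectedComponentIn (hD h0), h0⟩ ?_
  rintro z ⟨hzD, hz⟩
  have hclosure : closure D ⊆ closedBall 0 1 ∩ szegoMap ⁻¹' closedBall 0 (Real.exp (-t)) :=
    closure_minimal
      (inter_subset_inter ball_subset_closedBall (preimage_mono ball_subset_closedBall))
      (isClosed_closedBall.inter (isClosed_closedBall.preimage continuous_szegoMap))
  obtain ⟨hz₁, hzt⟩ := hclosure hzD
  rw [mem_preimage, mem_closedBall_zero_iff] at hzt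
  rw [mem_closedBall_zero_iff] at hz₁
  have hlt : ‖szegoMap z‖ < Real.exp (-t) :=
    hzt.lt_of_ne fun h => connectedComponentIn_subset _ _ hz ⟨h, hz₁⟩
  refine ⟨mem_ball_zero_iff.2 (hz₁.lt_of_ne fun h => ?_), mem_ball_zero_iff.2 hlt⟩
  have := (one_le_norm_szegoMap h).trans_lt hlt
  linarith [Real.exp_le_one_iff.2 (neg_nonpos.2 ht)]

/-- For every `w` with `|w| < 1` there is a unique `z` with `|z| < 1` and
`z e^{1−z} = w`; consequently `z ↦ z e^{1−z}` is a bijection from the interior of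
`γ_t` onto the open disk of radius `e^{−t}`. -/
theorem conformal_map_bijective :
    (∀ w : ℂ, ‖w‖ < 1 →
      ∃! z : ℂ, ‖z‖ < 1 ∧ z * Complex.exp (1 - z) = w) ∧
    ∀ t : ℝ, 0 ≤ t →
      Set.BijOn (fun z : ℂ => z * Complex.exp (1 - z)) (szegoInterior t)
        {w : ℂ | ‖w‖ < Real.exp (-t)} := by
  simp only [← mem_ball_zero_iff, ofPred_mem_eq]
  refine ⟨fun w hw => ?_, fun t ht => ?_⟩
  · obtain ⟨z, hz, hzw⟩ := ball_subset_image_szegoMap hw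
    exact ⟨z, ⟨hz, hzw⟩, fun y ⟨hy, hyw⟩ => injOn_szegoMap hy hz (hyw.trans hzw.symm)⟩
  · rw [szegoInterior_eq ht]
    refine ⟨fun z hz => hz.2, injOn_szegoMap.mono inter_subset_left, fun w hw => ?_⟩
    obtain ⟨z, hz, rfl⟩ := ball_subset_image_szegoMap
      (ball_subset_ball (Real.exp_le_one_iff.2 (neg_nonpos.2 ht)) hw)
    exact ⟨z, ⟨hz, hw⟩, rfl⟩
end

section
/- For every real number t ≥ 0 and every integer k ≥ 1, the equation e^{y·cot y}·(sin y)/y = e^{2t+1} has exactly one solution y in the open interval (2kπ, (2k+1)π). -/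
/-! Let `g = endpointLog`, `g y = y cot y + log (sin y) - log y`. As `sin > 0` on
`(2kπ, (2k+1)π)`, the equation there reads `g y = 2t + 1`. Over the common denominator
`y sin² y` the derivative of `g` has numerator `-((y - sin y cos y)² + sin⁴ y) < 0`, so `g` is
strictly decreasing. Writing `g y = (y cos y + sin y log (sin y)) / sin y - log y`, the numerator
is continuous with value `c cos c` at a zero `c` of `sin`; hence `g → +∞` at `2kπ` (this
needs `2kπ > 0`, i.e. `k ≥ 1`) and `g → -∞` at `(2k+1)π`, and the intermediate value theorem
gives a solution. -/

open Real Set Filter Topology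

noncomputable def endpointLog (y : ℝ) : ℝ :=
  y * (cos y / sin y) + log (sin y) - log y

theorem exp_endpointLog {y : ℝ} (hy : 0 < y) (hs : 0 < sin y) :
    exp (endpointLog y) = exp (y * (cos y / sin y)) * (sin y / y) := by
  rw [endpointLog, exp_sub, exp_add, exp_log hs, exp_log hy, mul_div_assoc]

theorem hasDerivAt_endpointLog {x : ℝ} (hx : x ≠ 0) (hs : sin x ≠ 0) :
    HasDerivAt endpointLog (2 * (cos x / sin x) - x / sin x ^ 2 - x⁻¹) x := by
  have hcot : HasDerivAt (fun y => cos y / sin y) (-1 / sin x ^ 2) x :=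
    ((hasDerivAt_cos x).div (hasDerivAt_sin x) hs).congr_deriv <| by
      rw [← sin_sq_add_cos_sq x]
      ring
  exact ((((hasDerivAt_id x).mul hcot).add ((hasDerivAt_sin x).log hs)).sub
    (hasDerivAt_log hx)).congr_deriv (by simp only [id]; ring)

theorem two_mul_cot_sub_div_sin_sq_sub_inv_neg {x : ℝ} (hx : 0 < x) (hs : sin x ≠ 0) :
    2 * (cos x / sin x) - x / sin x ^ 2 - x⁻¹ < 0 := by
  have hnum : 2 * cos x * sin x * x - x ^ 2 - sin x ^ 2 < 0 := by
    have hs4 : 0 < sin x ^ 4 := by positivity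
    nlinarith [sq_nonneg (x - sin x * cos x), sin_sq_add_cos_sq x]
  have hden : 0 < x * sin x ^ 2 := by positivity
  calc 2 * (cos x / sin x) - x / sin x ^ 2 - x⁻¹
      = (2 * cos x * sin x * x - x ^ 2 - sin x ^ 2) / (x * sin x ^ 2) := by
        field_simp
    _ < 0 := div_neg_of_neg_of_pos hnum hden

theorem endpointLog_eq_mul_inv_sin_sub_log {y : ℝ} (hs : sin y ≠ 0) :
    endpointLog y = (y * cos y + sin y * log (sin y)) * (sin y)⁻¹ - log y := by
  rw [endpointLog]
  field_simp

theorem tendsto_mul_cos_add_sin_mul_log_sin {l : Filter ℝ} {c : ℝ} (hl : l ≤ 𝓝 c)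
    (hsin : Tendsto sin l (𝓝 0)) :
    Tendsto (fun y => y * cos y + sin y * log (sin y)) l (𝓝 (c * cos c)) := by
  have hmul : Tendsto (fun y => y * cos y) l (𝓝 (c * cos c)) :=
    ((continuous_id.mul continuous_cos).tendsto c).mono_left hl
  have hmul_log : Tendsto (fun y => sin y * log (sin y)) l (𝓝 0) := by
    simpa [Function.comp_def] using (continuous_mul_log.tendsto 0).comp hsin
  simpa using hmul.add hmul_log

theorem tendsto_endpointLog_atTop {l : Filter ℝ} {c : ℝ} (hl : l ≤ 𝓝 c)
    (hsin : Tendsto sin l (𝓝[>] 0)) (hc : 0 < c * cos c) : Tendsto endpointLog l atTop := by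
  have hnum := tendsto_mul_cos_add_sin_mul_log_sin hl (hsin.mono_right nhdsWithin_le_nhds)
  have hinv : Tendsto (fun y => (sin y)⁻¹) l atTop := tendsto_inv_nhdsGT_zero.comp hsin
  have hlog : Tendsto (fun y => -log y) l (𝓝 (-log c)) :=
    ((continuousAt_log (left_ne_zero_of_mul hc.ne')).tendsto.mono_left hl).neg
  refine ((hnum.pos_mul_atTop hc hinv).atTop_add hlog).congr' ?_
  filter_upwards [hsin self_mem_nhdsWithin] with y hy
  rw [endpointLog_eq_mul_inv_sin_sub_log (ne_of_gt hy), sub_eq_add_neg]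

theorem tendsto_endpointLog_atBot {l : Filter ℝ} {c : ℝ} (hl : l ≤ 𝓝 c)
    (hsin : Tendsto sin l (𝓝[>] 0)) (hc : c * cos c < 0) : Tendsto endpointLog l atBot := by
  have hnum := tendsto_mul_cos_add_sin_mul_log_sin hl (hsin.mono_right nhdsWithin_le_nhds)
  have hinv : Tendsto (fun y => (sin y)⁻¹) l atTop := tendsto_inv_nhdsGT_zero.comp hsin
  have hlog : Tendsto (fun y => -log y) l (𝓝 (-log c)) :=
    ((continuousAt_log (left_ne_zero_of_mul hc.ne)).tendsto.mono_left hl).neg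
  refine ((hnum.neg_mul_atTop hc hinv).atBot_add hlog).congr' ?_
  filter_upwards [hsin self_mem_nhdsWithin] with y hy
  rw [endpointLog_eq_mul_inv_sin_sub_log (ne_of_gt hy), sub_eq_add_neg]

section Interval

variable (k : ℕ)

theorem sin_pos_of_mem_Ioo_two_mul_pi {x : ℝ} (hx : x ∈ Ioo (2 * k * π) ((2 * k + 1) * π)) :
    0 < sin x := by
  rw [← sin_sub_nat_mul_two_pi x k]
  exact sin_pos_of_pos_of_lt_pi (by linarith [hx.1]) (by linarith [hx.2])

theorem pos_of_mem_Ioo_two_mul_pi {x : ℝ} (hx : x ∈ Ioo (2 * k * π) ((2 * k + 1) * π)) :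
    0 < x :=
  lt_of_le_of_lt (by positivity) hx.1

theorem two_mul_pi_lt_succ : 2 * k * π < (2 * k + 1) * π := by nlinarith [pi_pos]

theorem tendsto_sin_nhdsGT_two_mul_pi : Tendsto sin (𝓝[>] (2 * k * π)) (𝓝[>] 0) := by
  have hsin : sin (2 * k * π) = 0 := by exact_mod_cast sin_nat_mul_pi (2 * k)
  refine tendsto_nhdsWithin_iff.2 ⟨?_, ?_⟩
  · exact hsin ▸ continuous_sin.continuousWithinAt
  · filter_upwards [Ioo_mem_nhdsGT (two_mul_pi_lt_succ k)] with x hx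
    using sin_pos_of_mem_Ioo_two_mul_pi k hx

theorem tendsto_sin_nhdsLT_two_mul_add_one_pi :
    Tendsto sin (𝓝[<] ((2 * k + 1) * π)) (𝓝[>] 0) := by
  have hsin : sin ((2 * k + 1) * π) = 0 := by exact_mod_cast sin_nat_mul_pi (2 * k + 1)
  refine tendsto_nhdsWithin_iff.2 ⟨?_, ?_⟩
  · exact hsin ▸ continuous_sin.continuousWithinAt
  · filter_upwards [Ioo_mem_nhdsLT (two_mul_pi_lt_succ k)] with x hx
    using sin_pos_of_mem_Ioo_two_mul_pi k hx

theorem continuousOn_endpointLog :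
    ContinuousOn endpointLog (Ioo (2 * k * π) ((2 * k + 1) * π)) := fun _ hx =>
  (hasDerivAt_endpointLog (pos_of_mem_Ioo_two_mul_pi k hx).ne'
    (sin_pos_of_mem_Ioo_two_mul_pi k hx).ne').continuousAt.continuousWithinAt

theorem strictAntiOn_endpointLog :
    StrictAntiOn endpointLog (Ioo (2 * k * π) ((2 * k + 1) * π)) := by
  have hderiv : ∀ x ∈ Ioo (2 * k * π) ((2 * k + 1) * π),
      HasDerivAt endpointLog (2 * (cos x / sin x) - x / sin x ^ 2 - x⁻¹) x := fun x hx =>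
    hasDerivAt_endpointLog (pos_of_mem_Ioo_two_mul_pi k hx).ne'
      (sin_pos_of_mem_Ioo_two_mul_pi k hx).ne'
  refine strictAntiOn_of_hasDerivWithinAt_neg (convex_Ioo _ _)
    (f' := fun x => 2 * (cos x / sin x) - x / sin x ^ 2 - x⁻¹)
    (continuousOn_endpointLog k) ?_ ?_ <;>
    rw [interior_Ioo]
  · exact fun x hx => (hderiv x hx).hasDerivWithinAt
  · exact fun x hx => two_mul_cot_sub_div_sin_sq_sub_inv_neg (pos_of_mem_Ioo_two_mul_pi k hx)
      (sin_pos_of_mem_Ioo_two_mul_pi k hx).ne'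

theorem surjOn_endpointLog (hk : 1 ≤ k) :
    SurjOn endpointLog (Ioo (2 * k * π) ((2 * k + 1) * π)) univ := by
  intro u _
  have hcos_left : cos (2 * k * π) = 1 := by
    rw [show 2 * (k : ℝ) * π = k * (2 * π) by ring, cos_nat_mul_two_pi]
  have hcos_right : cos ((2 * k + 1) * π) = -1 := by
    rw [show (2 * (k : ℝ) + 1) * π = k * (2 * π) + π by ring, cos_nat_mul_two_pi_add_pi]
  have hk' : (1 : ℝ) ≤ k := by exact_mod_cast hk
  have hleft : Tendsto endpointLog (𝓝[>] (2 * k * π)) atTop :=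
    tendsto_endpointLog_atTop nhdsWithin_le_nhds (tendsto_sin_nhdsGT_two_mul_pi k)
      (by rw [hcos_left]; nlinarith [pi_pos])
  have hright : Tendsto endpointLog (𝓝[<] ((2 * k + 1) * π)) atBot :=
    tendsto_endpointLog_atBot nhdsWithin_le_nhds (tendsto_sin_nhdsLT_two_mul_add_one_pi k)
      (by rw [hcos_right]; nlinarith [pi_pos])
  obtain ⟨a, ha, haI⟩ := ((hleft.eventually_ge_atTop u).and
    (Ioo_mem_nhdsGT (two_mul_pi_lt_succ k))).exists
  obtain ⟨b, hb, hbI⟩ := ((hright.eventually_le_atBot u).and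
    (Ioo_mem_nhdsLT (two_mul_pi_lt_succ k))).exists
  have hsub := ordConnected_Ioo.uIcc_subset haI hbI
  obtain ⟨y, hy, rfl⟩ :=
    intermediate_value_uIcc ((continuousOn_endpointLog k).mono hsub) (mem_uIcc_of_ge hb ha)
  exact ⟨y, hsub hy, rfl⟩

end Interval

theorem branch_cut_endpoint_equation_general (t : ℝ) (k : ℕ) (hk : 1 ≤ k) :
    ∃! y : ℝ, y ∈ Set.Ioo (2 * (k : ℝ) * Real.pi) ((2 * (k : ℝ) + 1) * Real.pi) ∧
      Real.exp (y * (Real.cos y / Real.sin y)) * (Real.sin y / y)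
        = Real.exp (2 * t + 1) := by
  have hequation : ∀ y ∈ Ioo (2 * (k : ℝ) * π) ((2 * k + 1) * π),
      exp (y * (cos y / sin y)) * (sin y / y) = exp (2 * t + 1) ↔ endpointLog y = 2 * t + 1 :=
    fun y hy => by
      rw [← exp_endpointLog (pos_of_mem_Ioo_two_mul_pi k hy)
        (sin_pos_of_mem_Ioo_two_mul_pi k hy), exp_eq_exp]
  obtain ⟨y, hyI, hy⟩ := surjOn_endpointLog k hk (mem_univ (2 * t + 1))
  refine ⟨y, ⟨hyI, (hequation y hyI).2 hy⟩, fun z ⟨hzI, hz⟩ => ?_⟩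
  exact (strictAntiOn_endpointLog k).injOn hzI hyI (by rw [(hequation z hzI).1 hz, hy])

/-- For every `t ≥ 0` and every integer `k ≥ 1`, the equation
`e^{y cot y} (sin y)/y = e^{2t+1}` has exactly one solution `y ∈ (2kπ, (2k+1)π)`. -/
theorem branch_cut_endpoint_equation (t : ℝ) (ht : 0 ≤ t) (k : ℕ) (hk : 1 ≤ k) :
    ∃! y : ℝ, y ∈ Set.Ioo (2 * (k : ℝ) * Real.pi) ((2 * (k : ℝ) + 1) * Real.pi) ∧
      Real.exp (y * (Real.cos y / Real.sin y)) * (Real.sin y / y)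
        = Real.exp (2 * t + 1) :=
  branch_cut_endpoint_equation_general t k hk
end

section
/- Let Ω ⊆ ℂ × ℝ be open and S : Ω → ℂ a function differentiable at a point (z₀, t₀) with z₀ ∉ {0, 1} and S(z₀, t₀) ≠ 1, satisfying the identity S(z,t)·e^{−S(z,t)} = e^{−2(t+1)}·e^{z}/z on a neighborhood of (z₀, t₀). Then the partial derivatives of S satisfy ∂S/∂t (z₀,t₀) = (2z₀/(1 − z₀)) · ∂S/∂z (z₀,t₀). -/
/-- The Schwarz function `S(z,t)`, characterized on an open set `Ω ⊆ ℂ × ℝ` by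
`S e^{−S} = e^{−2(t+1)} e^{z}/z`, satisfies the evolution relation
`∂S/∂t = (2z/(1−z)) ∂S/∂z` at any point of differentiability with `z₀ ∉ {0,1}` and
`S(z₀,t₀) ≠ 1`. -/
theorem schwarz_function_evolution (Ω : Set (ℂ × ℝ)) (hΩ : IsOpen Ω)
    (S : ℂ → ℝ → ℂ) (z₀ : ℂ) (t₀ : ℝ) (hmem : (z₀, t₀) ∈ Ω)
    (hdiff : DifferentiableAt ℝ (fun p : ℂ × ℝ => S p.1 p.2) (z₀, t₀))
    (hz0 : z₀ ≠ 0) (hz1 : z₀ ≠ 1) (hS1 : S z₀ t₀ ≠ 1)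
    (Sz St : ℂ)
    (hSz : HasDerivAt (fun z : ℂ => S z t₀) Sz z₀)
    (hSt : HasDerivAt (fun t : ℝ => S z₀ t) St t₀)
    (hid : ∀ p ∈ Ω, S p.1 p.2 * Complex.exp (-(S p.1 p.2))
        = Complex.exp (-2 * ((p.2 : ℂ) + 1)) * Complex.exp p.1 / p.1) :
    St = (2 * z₀ / (1 - z₀)) * Sz := by
  set S₀ := S z₀ t₀ with hS₀
  set E := Complex.exp (-S₀) with hE'
  set c := Complex.exp (-2 * ((t₀ : ℂ) + 1)) with hc'
  have hE : E ≠ 0 := Complex.exp_ne_zero _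
  have hA : S₀ * E = c * Complex.exp z₀ / z₀ := hid (z₀, t₀) hmem
  -- t-direction
  have hL_t : HasDerivAt (fun t => S z₀ t * Complex.exp (-(S z₀ t)))
      (St * E + S₀ * (E * -St)) t₀ := hSt.mul hSt.neg.cexp
  have h1 : HasDerivAt (fun w : ℂ => Complex.exp (-2 * (w + 1))) (c * -2) (t₀ : ℂ) := by
    have := (((hasDerivAt_id ((t₀:ℂ))).add_const 1).const_mul (-2 : ℂ)).cexp
    simpa [hc'] using this
  have hR_t : HasDerivAt (fun t : ℝ => Complex.exp (-2 * ((t:ℂ) + 1)) * Complex.exp z₀ / z₀)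
      (c * -2 * Complex.exp z₀ / z₀) t₀ := (h1.comp_ofReal.mul_const _).div_const _
  have htmem : ∀ᶠ t in nhds t₀, (z₀, t) ∈ Ω :=
    (hΩ.preimage (by fun_prop : Continuous fun t : ℝ => (z₀, t))).mem_nhds hmem
  have ht : (fun t => S z₀ t * Complex.exp (-(S z₀ t))) =ᶠ[nhds t₀]
      fun t : ℝ => Complex.exp (-2 * ((t:ℂ) + 1)) * Complex.exp z₀ / z₀ := by
    filter_upwards [htmem] with t h using hid (z₀, t) h
  have eqt : St * E + S₀ * (E * -St) = c * -2 * Complex.exp z₀ / z₀ :=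
    hL_t.unique (hR_t.congr_of_eventuallyEq ht)
  -- z-direction
  have hL_z : HasDerivAt (fun z => S z t₀ * Complex.exp (-(S z t₀)))
      (Sz * E + S₀ * (E * -Sz)) z₀ := hSz.mul hSz.neg.cexp
  have hR_z : HasDerivAt (fun z : ℂ => c * Complex.exp z / z)
      ((c * Complex.exp z₀ * z₀ - c * Complex.exp z₀ * 1) / z₀ ^ 2) z₀ :=
    ((Complex.hasDerivAt_exp z₀).const_mul c).div (hasDerivAt_id z₀) hz0
  have hzmem : ∀ᶠ z in nhds z₀, (z, t₀) ∈ Ω :=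
    (hΩ.preimage (by fun_prop : Continuous fun z : ℂ => (z, t₀))).mem_nhds hmem
  have hz : (fun z => S z t₀ * Complex.exp (-(S z t₀))) =ᶠ[nhds z₀]
      fun z : ℂ => c * Complex.exp z / z := by
    filter_upwards [hzmem] with z h using hid (z, t₀) h
  have eqz : Sz * E + S₀ * (E * -Sz) = (c * Complex.exp z₀ * z₀ - c * Complex.exp z₀ * 1) / z₀ ^ 2 :=
    hL_z.unique (hR_z.congr_of_eventuallyEq hz)
  -- algebra
  have h1S : (1 : ℂ) - S₀ ≠ 0 := sub_ne_zero.mpr (Ne.symm hS1)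
  have h1z : (1 : ℂ) - z₀ ≠ 0 := sub_ne_zero.mpr (Ne.symm hz1)
  field_simp at eqt eqz hA ⊢
  have key_t : St * (1 - S₀) * (E * z₀) = -2 * S₀ * (E * z₀) := by
    linear_combination eqt + 2 * hA
  have key_z : Sz * (1 - S₀) * z₀ * (E * z₀) = S₀ * (z₀ - 1) * (E * z₀) := by
    linear_combination eqz - (z₀ - 1) * hA
  have kt : St * (1 - S₀) = -2 * S₀ := mul_right_cancel₀ (mul_ne_zero hE hz0) key_t
  have kz : Sz * (1 - S₀) * z₀ = S₀ * (z₀ - 1) := mul_right_cancel₀ (mul_ne_zero hE hz0) key_z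
  refine mul_left_cancel₀ h1S ?_
  linear_combination (1 - z₀) * kt - 2 * kz
end

section
/- Let n ≥ 1, let g be a nonzero complex number, and let z₁, …, z_n be distinct nonzero complex numbers satisfying the saddle point equations (1/g)·(1 + 1/z_i) + ∑_{j ≠ i} 2/(z_j − z_i) = 0 for every i = 1, …, n. Then ∑_{i=1}^{n} 1/z_i = −n. -/
/-- Saddle points of the Penner matrix model satisfy `∑ᵢ 1/zᵢ = −n`. -/
theorem penner_saddle_sum_inverses (n : ℕ) (hn : 1 ≤ n) (g : ℂ) (hg : g ≠ 0)
    (z : Fin n → ℂ) (hinj : Function.Injective z) (hz : ∀ i, z i ≠ 0)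
    (hsaddle : ∀ i, (1 / g) * (1 + 1 / z i)
        + ∑ j ∈ Finset.univ \ {i}, 2 / (z j - z i) = 0) :
    ∑ i, 1 / z i = -(n : ℂ) := by
  have hS : ∑ i, ∑ j ∈ Finset.univ \ {i}, 2 / (z j - z i) = 0 := by
    have hswap : ∑ i, ∑ j ∈ Finset.univ \ {i}, 2 / (z j - z i)
        = ∑ j, ∑ i ∈ Finset.univ \ {j}, 2 / (z j - z i) := by
      rw [Finset.sum_comm' (s' := fun j => Finset.univ \ {j}) (t' := Finset.univ)]
      intro i j
      simp [eq_comm]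
    have hneg : ∑ j, ∑ i ∈ Finset.univ \ {j}, 2 / (z j - z i)
        = -∑ i, ∑ j ∈ Finset.univ \ {i}, 2 / (z j - z i) := by
      rw [← Finset.sum_neg_distrib]
      refine Finset.sum_congr rfl fun j _ => ?_
      rw [← Finset.sum_neg_distrib]
      refine Finset.sum_congr rfl fun i _ => ?_
      rw [← div_neg, neg_sub]
    have key := hswap.trans hneg
    linear_combination key / 2
  have hsum : ∑ i, ((1 / g) * (1 + 1 / z i)
      + ∑ j ∈ Finset.univ \ {i}, 2 / (z j - z i)) = 0 :=
    Finset.sum_eq_zero fun i _ => hsaddle i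
  rw [Finset.sum_add_distrib, hS, add_zero, ← Finset.mul_sum] at hsum
  have h1g : (1 / g : ℂ) ≠ 0 := one_div_ne_zero hg
  have h2 : ∑ i, (1 + 1 / z i) = 0 := by
    rcases mul_eq_zero.mp hsum with h | h
    · exact absurd h h1g
    · exact h
  rw [Finset.sum_add_distrib, Finset.sum_const, Finset.card_univ, Fintype.card_fin,
    nsmul_eq_mul, mul_one] at h2
  linear_combination h2
end

section
/- Let n ≥ 1, let g be a nonzero complex number, and let z₁, …, z_n be distinct nonzero complex numbers satisfying (1/g)·(1 + 1/z_i) + ∑_{j ≠ i} 2/(z_j − z_i) = 0 for every i. Then the monic polynomial P(z) = ∏_{i=1}^{n} (z − z_i) satisfies the second-order differential equation g·z·P''(z) − (z + 1)·P'(z) + n·P(z) = 0 identically in z; equivalently, P is proportional to the rescaled Laguerre polynomial L_n^{(α)}(z/g) with α = −1 − 1/g. -/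
open Polynomial Finset

private lemma penner_deriv_prod {ι : Type*} [DecidableEq ι] (s : Finset ι)
    (f : ι → Polynomial ℂ) :
    derivative (∏ i ∈ s, f i) = ∑ i ∈ s, (∏ j ∈ s.erase i, f j) * derivative (f i) := by
  induction s using Finset.induction_on with
  | empty => simp
  | @insert a s ha ih =>
    rw [Finset.prod_insert ha, derivative_mul, ih, Finset.sum_insert ha,
      Finset.erase_insert ha, Finset.mul_sum]
    congr 1
    · exact mul_comm _ _
    · refine Finset.sum_congr rfl fun i hi => ?_
      have hia : i ≠ a := by rintro rfl; exact ha hi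
      have hna : a ∉ s.erase i := fun h => ha (Finset.mem_of_mem_erase h)
      rw [Finset.erase_insert_of_ne hia.symm, Finset.prod_insert hna, mul_assoc]

/-- The monic polynomial whose roots are the saddle points of the Penner matrix model
satisfies the rescaled Laguerre differential equation
`g z P'' − (z + 1) P' + n P = 0`; equivalently it is proportional to the rescaled
Laguerre polynomial `L_n^{(α)}(z/g)` with `α = −1 − 1/g`. -/
theorem penner_saddle_polynomial_ode (n : ℕ) (hn : 1 ≤ n) (g : ℂ) (hg : g ≠ 0)
    (z : Fin n → ℂ) (hinj : Function.Injective z) (hz : ∀ i, z i ≠ 0)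
    (hsaddle : ∀ i, (1 / g) * (1 + 1 / z i)
        + ∑ j ∈ Finset.univ \ {i}, 2 / (z j - z i) = 0)
    (P : Polynomial ℂ) (hP : P = ∏ i, (Polynomial.X - Polynomial.C (z i))) :
    Polynomial.C g * Polynomial.X * derivative (derivative P)
      - (Polynomial.X + 1) * derivative P + Polynomial.C (n : ℂ) * P = 0 := by
  classical
  have hne : ∀ i j : Fin n, j ≠ i → z i - z j ≠ 0 :=
    fun i j h => sub_ne_zero.2 fun e => h (hinj e.symm)
  have hP' : derivative P = ∑ i, ∏ j ∈ Finset.univ.erase i, (X - C (z j)) := by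
    rw [hP, penner_deriv_prod]
    simp [derivative_X_sub_C]
  have hP'' : derivative (derivative P) =
      ∑ i, ∑ j ∈ Finset.univ.erase i,
        ∏ k ∈ (Finset.univ.erase i).erase j, (X - C (z k)) := by
    rw [hP', derivative_sum]
    refine Finset.sum_congr rfl fun i _ => ?_
    rw [penner_deriv_prod]
    simp [derivative_X_sub_C]
  -- degree of P
  have hPmonic : P.Monic := by
    rw [hP]; exact monic_prod_of_monic _ _ fun i _ => monic_X_sub_C _
  have hPdeg : P.natDegree = n := by
    rw [hP, natDegree_prod_of_monic _ _ fun i _ => monic_X_sub_C _]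
    simp
  -- coefficient vanishing for degrees ≥ n
  have hcoeff : ∀ m : ℕ, n ≤ m →
      (Polynomial.C g * Polynomial.X * derivative (derivative P)
        - (Polynomial.X + 1) * derivative P + Polynomial.C (n : ℂ) * P).coeff m = 0 := by
    intro m hm
    obtain ⟨k, rfl⟩ : ∃ k, m = k + 1 := ⟨m - 1, by omega⟩
    have hPc : ∀ l : ℕ, n < l → P.coeff l = 0 := fun l hl =>
      coeff_eq_zero_of_natDegree_lt (by omega)
    have h1 : (C g * X * derivative (derivative P)).coeff (k + 1) = 0 := by
      rw [mul_assoc, coeff_C_mul, coeff_X_mul, coeff_derivative, coeff_derivative,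
        hPc (k + 2) (by omega)]
      ring
    have h2 : ((X + 1) * derivative P).coeff (k + 1)
        = P.coeff (k + 1) * (k + 1) := by
      rw [add_mul, one_mul, coeff_add, coeff_X_mul, coeff_derivative, coeff_derivative,
        hPc (k + 2) (by omega)]
      push_cast
      ring
    rw [coeff_add, coeff_sub, h1, h2, coeff_C_mul]
    rcases eq_or_lt_of_le hm with h | h
    · rw [h]
      push_cast
      ring
    · rw [hPc (k + 1) (by omega)]
      ring
  -- evaluation at each root
  have hevalP : ∀ i, eval (z i) P = 0 := fun i => by
    rw [hP, eval_prod]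
    exact Finset.prod_eq_zero (mem_univ i) (by simp)
  have hevalP' : ∀ i, eval (z i) (derivative P)
      = ∏ j ∈ Finset.univ.erase i, (z i - z j) := by
    intro i
    rw [hP', eval_finset_sum,
      Finset.sum_eq_single_of_mem i (mem_univ i) (fun b _ hb => by
        rw [eval_prod]
        exact Finset.prod_eq_zero (Finset.mem_erase.2 ⟨fun e => hb e.symm, mem_univ i⟩)
          (by simp)),
      eval_prod]
    simp
  have hevalP'' : ∀ i, eval (z i) (derivative (derivative P))
      = 2 * ∑ j ∈ Finset.univ.erase i,
          ∏ k ∈ (Finset.univ.erase i).erase j, (z i - z k) := fun i => by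
    rw [hP'', eval_finset_sum]
    rw [← Finset.add_sum_erase _ _ (mem_univ i)]
    have hA : eval (z i) (∑ j ∈ Finset.univ.erase i,
        ∏ k ∈ (Finset.univ.erase i).erase j, (X - C (z k)))
        = ∑ j ∈ Finset.univ.erase i,
          ∏ k ∈ (Finset.univ.erase i).erase j, (z i - z k) := by
      rw [eval_finset_sum]
      exact Finset.sum_congr rfl fun j _ => by simp [eval_prod]
    have hB : ∀ b ∈ Finset.univ.erase i,
        eval (z i) (∑ j ∈ Finset.univ.erase b,
          ∏ k ∈ (Finset.univ.erase b).erase j, (X - C (z k)))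
        = ∏ k ∈ (Finset.univ.erase i).erase b, (z i - z k) := by
      intro b hb
      have hbi : b ≠ i := (Finset.mem_erase.1 hb).1
      rw [eval_finset_sum,
        Finset.sum_eq_single_of_mem i (Finset.mem_erase.2 ⟨fun e => hbi e.symm, mem_univ i⟩)
          (fun c hc hci => by
            rw [eval_prod]
            exact Finset.prod_eq_zero (Finset.mem_erase.2 ⟨fun e => hci e.symm,
              Finset.mem_erase.2 ⟨fun e => hbi e.symm, mem_univ i⟩⟩) (by simp)),
        eval_prod, Finset.erase_right_comm]
      simp
    rw [hA, Finset.sum_congr rfl hB, two_mul]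
  have heval : ∀ i, eval (z i)
      (Polynomial.C g * Polynomial.X * derivative (derivative P)
        - (Polynomial.X + 1) * derivative P + Polynomial.C (n : ℂ) * P) = 0 := by
    intro i
    set A : ℂ := ∏ j ∈ Finset.univ.erase i, (z i - z j) with hAdef
    have hprod : ∀ j ∈ Finset.univ.erase i,
        ∏ k ∈ (Finset.univ.erase i).erase j, (z i - z k) = A * (z i - z j)⁻¹ := by
      intro j hj
      rw [hAdef, ← Finset.mul_prod_erase _ _ hj]
      field_simp [hne i j (Finset.mem_erase.1 hj).1]
    have hsum : ∑ j ∈ Finset.univ.erase i,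
        ∏ k ∈ (Finset.univ.erase i).erase j, (z i - z k)
        = A * ∑ j ∈ Finset.univ.erase i, (z i - z j)⁻¹ := by
      rw [Finset.mul_sum]
      exact Finset.sum_congr rfl hprod
    have hS := hsaddle i
    rw [← Finset.erase_eq] at hS
    have hS' : ∑ j ∈ Finset.univ.erase i, (2 : ℂ) / (z j - z i)
        = - ∑ j ∈ Finset.univ.erase i, 2 * (z i - z j)⁻¹ := by
      rw [← Finset.sum_neg_distrib]
      refine Finset.sum_congr rfl fun j hj => ?_
      have : z j - z i = -(z i - z j) := by ring
      rw [this, div_eq_mul_inv, inv_neg]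
      ring
    rw [hS'] at hS
    have hT : ∑ j ∈ Finset.univ.erase i, (2 : ℂ) * (z i - z j)⁻¹
        = (1 / g) * (1 + 1 / z i) := by linear_combination -hS
    have hT' : (2 : ℂ) * ∑ j ∈ Finset.univ.erase i, (z i - z j)⁻¹
        = (1 / g) * (1 + 1 / z i) := by
      rw [Finset.mul_sum]; exact hT
    simp only [eval_add, eval_sub, eval_mul, eval_C, eval_X, eval_one,
      hevalP i, hevalP' i, hevalP'' i, hsum]
    have hzi := hz i
    field_simp at hT' ⊢
    linear_combination A * hT'
  set Q := Polynomial.C g * Polynomial.X * derivative (derivative P)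
      - (Polynomial.X + 1) * derivative P + Polynomial.C (n : ℂ) * P with hQ
  have hQdeg : Q.natDegree < n := by
    by_contra h
    push_neg at h
    have h0 : Q ≠ 0 := by
      intro h0
      rw [h0] at h
      simp at h
      omega
    have := hcoeff Q.natDegree h
    exact h0 (leadingCoeff_eq_zero.1 this)
  exact Polynomial.eq_zero_of_natDegree_lt_card_of_eval_eq_zero Q hinj heval
    (by simpa using hQdeg)
end

section
/- Let α be a complex number, n ≥ 1, and let P(z) = ∏_{i=1}^{n} (z − l_i) be a monic polynomial with distinct nonzero roots l₁, …, l_n satisfying the Laguerre differential equation z·P''(z) + (α + 1 − z)·P'(z) + n·P(z) = 0. Then the roots satisfy the Stieltjes electrostatic equations ∑_{j ≠ i} 2/(l_i − l_j) = 1 − (α + 1)/l_i for every i = 1, …, n. In particular, with α = −1 − 1/g, the points z_i = g·l_i satisfy the saddle point equations (1/g)(1 + 1/z_i) + ∑_{j≠i} 2/(z_j − z_i) = 0 of the Penner matrix model. -/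
/-!
At a root `a = lᵢ` write `P = (X - a) Q` with `Q(a) ≠ 0`. Then `P'(a) = Q(a)` and
`P''(a) = 2 Q'(a)`, so the Laguerre equation evaluated at `a` reads
`2 a Q'(a) + (α + 1 - a) Q(a) = 0`. Since `Q'(a) / Q(a) = ∑_{j ≠ i} 1 / (a - lⱼ)` is the
logarithmic derivative of `Q`, this is the Stieltjes equation; the Penner saddle point
equations are its rescaling by `g`.
-/

open Polynomial

theorem eval_derivative_prod_X_sub_C {K ι : Type*} [Field K] (s : Finset ι) (l : ι → K) {x : K}
    (hx : ∀ j ∈ s, x ≠ l j) :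
    eval x (derivative (∏ j ∈ s, (X - C (l j))))
      = eval x (∏ j ∈ s, (X - C (l j))) * ∑ j ∈ s, 1 / (x - l j) := by
  classical
  simp only [derivative_prod_finset, derivative_X_sub_C, mul_one, eval_finsetSum, eval_prod,
    eval_sub, eval_X, eval_C, Finset.mul_sum]
  refine Finset.sum_congr rfl fun j hj => ?_
  rw [← Finset.mul_prod_erase s _ hj, mul_one_div,
    mul_div_cancel_left₀ _ (sub_ne_zero.2 (hx j hj))]

theorem eval_derivative_X_sub_C_mul {R : Type*} [CommRing R] (a : R) (Q : R[X]) :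
    eval a (derivative ((X - C a) * Q)) = eval a Q := by
  simp

theorem eval_derivative_derivative_X_sub_C_mul {R : Type*} [CommRing R] (a : R) (Q : R[X]) :
    eval a (derivative (derivative ((X - C a) * Q))) = 2 * eval a (derivative Q) := by
  rw [derivative_mul, derivative_X_sub_C, one_mul, derivative_add, derivative_mul,
    derivative_X_sub_C, one_mul]
  simp only [eval_add, eval_mul, eval_sub, eval_X, eval_C, sub_self, zero_mul, add_zero]
  ring

theorem sum_two_div_sub_eq_of_laguerre_ode {K ι : Type*} [Field K] [Fintype ι] [DecidableEq ι]
    {l : ι → K} (hinj : Function.Injective l) {i : ι} (hli : l i ≠ 0) {β c : K} {P : K[X]}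
    (hP : P = ∏ j, (X - C (l j)))
    (hode : X * derivative (derivative P) + (C β - X) * derivative P + C c * P = 0) :
    ∑ j ∈ Finset.univ.erase i, 2 / (l i - l j) = 1 - β / l i := by
  set Q := ∏ j ∈ Finset.univ.erase i, (X - C (l j))
  have hPQ : P = (X - C (l i)) * Q := hP ▸ (Finset.mul_prod_erase _ _ (Finset.mem_univ i)).symm
  have hne : ∀ j ∈ Finset.univ.erase i, l i ≠ l j := fun j hj h =>
    (Finset.mem_erase.1 hj).1 (hinj h).symm
  have hQ : eval (l i) Q ≠ 0 := by
    simpa only [Q, eval_prod, eval_sub, eval_X, eval_C, Finset.prod_ne_zero_iff, sub_ne_zero]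
  have hroot : l i * (2 * eval (l i) (derivative Q)) + (β - l i) * eval (l i) Q = 0 := by
    have h := congrArg (eval (l i)) hode
    rw [hPQ] at h
    simpa only [eval_add, eval_mul, eval_sub, eval_X, eval_C, eval_zero, sub_self, zero_mul,
      mul_zero, add_zero, eval_derivative_X_sub_C_mul, eval_derivative_derivative_X_sub_C_mul]
      using h
  rw [eval_derivative_prod_X_sub_C _ _ hne] at hroot
  have htwo : ∑ j ∈ Finset.univ.erase i, 2 / (l i - l j)
      = 2 * ∑ j ∈ Finset.univ.erase i, 1 / (l i - l j) := by
    simp only [Finset.mul_sum, mul_one_div]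
  have hsum : (∑ j ∈ Finset.univ.erase i, 2 / (l i - l j)) * l i = l i - β :=
    mul_right_cancel₀ hQ (by rw [htwo]; linear_combination hroot)
  field_simp
  linear_combination hsum

theorem sum_two_div_mul_sub_mul {K ι : Type*} [Field K] (s : Finset ι) (l : ι → K) (g a : K) :
    ∑ j ∈ s, 2 / (g * l j - g * a) = -(1 / g) * ∑ j ∈ s, 2 / (a - l j) := by
  rw [Finset.mul_sum]
  refine Finset.sum_congr rfl fun j _ => ?_
  rw [← mul_sub, ← neg_sub a, mul_neg, div_neg, div_mul_eq_div_div_swap, neg_mul,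
    one_div_mul_eq_div]

theorem laguerre_zeros_stieltjes_general (α : ℂ) (n : ℕ) (l : Fin n → ℂ)
    (hinj : Function.Injective l) (hl : ∀ i, l i ≠ 0)
    (P : Polynomial ℂ) (hP : P = ∏ i, (Polynomial.X - Polynomial.C (l i)))
    (hode : Polynomial.X * derivative (derivative P)
        + (Polynomial.C (α + 1) - Polynomial.X) * derivative P
        + Polynomial.C (n : ℂ) * P = 0) :
    (∀ i, ∑ j ∈ Finset.univ \ {i}, 2 / (l i - l j) = 1 - (α + 1) / l i) ∧
    (∀ g : ℂ, g ≠ 0 → α = -1 - 1 / g →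
      ∀ i, (1 / g) * (1 + 1 / (g * l i))
          + ∑ j ∈ Finset.univ \ {i}, 2 / (g * l j - g * l i) = 0) := by
  have stieltjes : ∀ i, ∑ j ∈ Finset.univ \ {i}, 2 / (l i - l j) = 1 - (α + 1) / l i :=
    fun i => by
      rw [Finset.sdiff_singleton_eq_erase]
      exact sum_two_div_sub_eq_of_laguerre_ode hinj (hl i) hP hode
  refine ⟨stieltjes, fun g hg hα i => ?_⟩
  rw [sum_two_div_mul_sub_mul, stieltjes, hα]
  field_simp
  ring

/-- Stieltjes electrostatic equations for the zeros of a Laguerre polynomial: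
if the monic polynomial `P` with distinct nonzero roots `l₁, …, l_n` satisfies
`z P'' + (α + 1 − z) P' + n P = 0`, then `∑_{j≠i} 2/(lᵢ − lⱼ) = 1 − (α+1)/lᵢ` for
every `i`; in particular, with `α = −1 − 1/g`, the points `zᵢ = g lᵢ` satisfy the
saddle point equations of the Penner matrix model. -/
theorem laguerre_zeros_stieltjes (α : ℂ) (n : ℕ) (hn : 1 ≤ n) (l : Fin n → ℂ)
    (hinj : Function.Injective l) (hl : ∀ i, l i ≠ 0)
    (P : Polynomial ℂ) (hP : P = ∏ i, (Polynomial.X - Polynomial.C (l i)))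
    (hode : Polynomial.X * derivative (derivative P)
        + (Polynomial.C (α + 1) - Polynomial.X) * derivative P
        + Polynomial.C (n : ℂ) * P = 0) :
    (∀ i, ∑ j ∈ Finset.univ \ {i}, 2 / (l i - l j) = 1 - (α + 1) / l i) ∧
    (∀ g : ℂ, g ≠ 0 → α = -1 - 1 / g →
      ∀ i, (1 / g) * (1 + 1 / (g * l i))
          + ∑ j ∈ Finset.univ \ {i}, 2 / (g * l j - g * l i) = 0) :=
  laguerre_zeros_stieltjes_general α n l hinj hl P hP hode
end
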